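/- Modus ponens for AGM robustness: for all x, y ∈ [−1, 1], if the implication value ▷(x, y) := ▽(−x, y) is strictly positive and x > 0, then y > 0. -/

import Mathlib

/-- AGM disjunction function. -/
noncomputable def agmOr (x y : ℝ) : ℝ :=
  if 0 < x ∨ 0 < y then (max x 0 + max y 0) / 2
  else 1 - Real.sqrt ((1 - x) * (1 - y))

/-- AGM implication. -/
noncomputable def agmImp (x y : ℝ) : ℝ := agmOr (-x) y

theorem agmOr_of_nonpos {x y : ℝ} (hx : x ≤ 0) (hy : y ≤ 0) :
    agmOr x y = 1 - Real.sqrt ((1 - x) * (1 - y)) := by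
  rw [agmOr, if_neg (not_or.mpr ⟨hx.not_gt, hy.not_gt⟩)]

theorem agmOr_nonpos {x y : ℝ} (hx : x ≤ 0) (hy : y ≤ 0) : agmOr x y ≤ 0 := by
  have hprod : 1 ≤ (1 - x) * (1 - y) :=
    one_le_mul_of_one_le_of_one_le (by linarith) (by linarith)
  rw [agmOr_of_nonpos hx hy, sub_nonpos]
  exact Real.one_le_sqrt.mpr hprod

theorem agmImp_nonpos {x y : ℝ} (hx : 0 ≤ x) (hy : y ≤ 0) : agmImp x y ≤ 0 :=
  agmOr_nonpos (neg_nonpos.mpr hx) hy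

/-- Modus ponens for AGM robustness. -/
theorem agm_modus_ponens :
    ∀ x y : ℝ, x ∈ Set.Icc (-1 : ℝ) 1 → y ∈ Set.Icc (-1 : ℝ) 1 →
      0 < agmImp x y → 0 < x → 0 < y := by
  intro x y _ _ himp hx
  by_contra! hy
  exact (agmImp_nonpos hx.le hy).not_gt himp
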